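/- arXiv:2411.01876 — 2 statements merged into one kernel-verified Lean document; each statement's English description precedes it below -/
import Mathlib

section
/- Let R and Y be finite sets, X a set, and F a finite family of functions f: X×R→Y that is pairwise independent and F_{x,r,y} nonempty for all appearing triples. Fix x∈X. For each r∈R and y∈Y let p_{x,r,y} = Pr_{f←F}[f(x,r)=y], and let M_x be the matrix (operator from ℂ^{R×Y} to ℂ^F) whose (r,y)-th column is (1/√|R|)·|F_{x,r,y}⟩. Let |Φ₀⟩ ∈ ℂ^{R×Y} be the unit vector with (r,y)-entry √(p_{x,r,y}/|R|), and for each r let |Φ_{0,r}⟩ be the unit vector with (r',y)-entry δ_{r,r'}·√(p_{x,r,y}). Then M_x† M_x = (1/|R|)·I + |Φ₀⟩⟨Φ₀| − Σ_{r∈R}(1/|R|)·|Φ_{0,r}⟩⟨Φ_{0,r}|. -/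
open Matrix

/-- `Pr_{f←F}[f (x,r) = y]` for the uniform distribution on the finite family `F`. -/
noncomputable def prob {X R Y : Type*} [DecidableEq Y]
    (F : Finset ((X × R) → Y)) (x : X) (r : R) (y : Y) : ℝ :=
  ((F.filter (fun f => f (x, r) = y)).card : ℝ) / F.card

/-- The matrix `M_x` whose `(r,y)`-th column is `(1/√|R|)·|F_{x,r,y}⟩`, where
`|F_{x,r,y}⟩` is the normalized uniform superposition over
`F_{x,r,y} = {f ∈ F : f (x,r) = y}`, in the Hilbert space with orthonormal basis
indexed by functions. -/
noncomputable def Mx {X R Y : Type*} [Fintype X] [Fintype R] [Fintype Y]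
    [DecidableEq X] [DecidableEq R] [DecidableEq Y]
    (F : Finset ((X × R) → Y)) (x : X) : Matrix ((X × R) → Y) (R × Y) ℂ :=
  Matrix.of fun f ry =>
    if f ∈ F.filter (fun g => g (x, ry.1) = ry.2) then
      ((((Real.sqrt (Fintype.card R))⁻¹ *
        (Real.sqrt ((F.filter (fun g => g (x, ry.1) = ry.2)).card))⁻¹ : ℝ)) : ℂ)
    else 0

/-!
Column `(r, y)` of `M_x` is `|R|^{-1/2} |F_{x,r,y}⟩`, so `M_x† M_x` is `|R|⁻¹` times the Gram
matrix of the states `|F_{x,r,y}⟩`. For a fixed `r` these are normalized indicators of disjoint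
sets, hence orthonormal; for `r ≠ r'` pairwise independence gives
`|F_{x,r,y} ∩ F_{x,r',y'}| = |F| p_{x,r,y} p_{x,r',y'}`, so their overlap is
`√(p_{x,r,y} p_{x,r',y'})`. On the right-hand side the rank-one term `|Φ₀⟩⟨Φ₀|` puts
`√(p_{x,r,y} p_{x,r',y'}) / |R|` in every entry and the terms `|Φ_{0,r}⟩⟨Φ_{0,r}|` remove it again
from the diagonal blocks `r = r'`.
-/

theorem Real.sqrt_div_mul_sqrt_div {a b c : ℝ} (hc : 0 ≤ c) :
    √(a / c) * √(b / c) = c⁻¹ * (√a * √b) := by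
  rw [Real.sqrt_div' _ hc, Real.sqrt_div' _ hc, div_mul_div_comm, Real.mul_self_sqrt hc,
    inv_mul_eq_div]

theorem div_sqrt_mul_sqrt_of_div_eq_mul_div {a b c N : ℝ} (ha : 0 < a) (hb : 0 < b) (hN : 0 < N)
    (h : c / N = a / N * (b / N)) : c / (√a * √b) = √(a / N) * √(b / N) := by
  have hc : c = a * b / N := by
    field_simp at h
    field_simp
    linarith
  have hab : √a * √b ≠ 0 := by positivity
  have hsq : a * b = (√a * √b) * (√a * √b) := by
    rw [mul_mul_mul_comm, Real.mul_self_sqrt ha.le, Real.mul_self_sqrt hb.le]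
  rw [Real.sqrt_div_mul_sqrt_div hN.le, hc, hsq]
  field_simp

namespace Mx

variable {X R Y : Type*} [DecidableEq Y] (F : Finset ((X × R) → Y)) (x : X)

/-- `F_{x,r,y}`. -/
def fiber (r : R) (y : Y) : Finset ((X × R) → Y) :=
  F.filter fun f => f (x, r) = y

/-- `⟨F_{x,r,y} | F_{x,r',y'}⟩`. -/
noncomputable def overlap (r : R) (y : Y) (r' : R) (y' : Y) : ℝ :=
  ((F.filter fun f => f (x, r) = y ∧ f (x, r') = y').card : ℝ) /
    (√(fiber F x r y).card * √(fiber F x r' y').card)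

theorem overlap_self {r : R} {y : Y} (h : (fiber F x r y).Nonempty) :
    overlap F x r y r y = 1 := by
  have hpos : (0 : ℝ) < (fiber F x r y).card := by exact_mod_cast h.card_pos
  simp only [overlap, and_self]
  rw [Real.mul_self_sqrt hpos.le, ← fiber, div_self hpos.ne']

theorem overlap_of_ne {r : R} {y y' : Y} (hy : y ≠ y') : overlap F x r y r y' = 0 := by
  have hempty : (F.filter fun f => f (x, r) = y ∧ f (x, r) = y') = ∅ :=
    Finset.filter_false_of_mem fun f _ hf => hy (hf.1.symm.trans hf.2)
  rw [overlap, hempty, Finset.card_empty, Nat.cast_zero, zero_div]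

theorem overlap_eq_sqrt_mul_sqrt {r r' : R} {y y' : Y} (h : (fiber F x r y).Nonempty)
    (h' : (fiber F x r' y').Nonempty)
    (hind : ((F.filter fun f => f (x, r) = y ∧ f (x, r') = y').card : ℝ) / F.card =
      prob F x r y * prob F x r' y') :
    overlap F x r y r' y' = √(prob F x r y) * √(prob F x r' y') := by
  have hF : (0 : ℝ) < F.card := by exact_mod_cast (h.mono (Finset.filter_subset _ F)).card_pos
  exact div_sqrt_mul_sqrt_of_div_eq_mul_div (by exact_mod_cast h.card_pos)
    (by exact_mod_cast h'.card_pos) hF hind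

theorem overlap_eq_ite [DecidableEq R] {r r' : R} {y y' : Y} (h : (fiber F x r y).Nonempty)
    (h' : (fiber F x r' y').Nonempty)
    (hind : r ≠ r' → ((F.filter fun f => f (x, r) = y ∧ f (x, r') = y').card : ℝ) / F.card =
      prob F x r y * prob F x r' y') :
    overlap F x r y r' y' =
      if r = r' then (if y = y' then 1 else 0) else √(prob F x r y) * √(prob F x r' y') := by
  split_ifs with hr hy
  · subst hr hy
    exact overlap_self F x h
  · subst hr
    exact overlap_of_ne F x hy
  · exact overlap_eq_sqrt_mul_sqrt F x h h' (hind hr)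

variable [Fintype X] [Fintype R] [Fintype Y] [DecidableEq X] [DecidableEq R]

theorem conjTranspose_mul_self_apply (r : R) (y : Y) (r' : R) (y' : Y) :
    ((Mx F x)ᴴ * Mx F x) (r, y) (r', y') =
      (((Fintype.card R : ℝ)⁻¹ * overlap F x r y r' y' : ℝ) : ℂ) := by
  rw [show ((Fintype.card R : ℝ))⁻¹ = (√(Fintype.card R : ℝ))⁻¹ * (√(Fintype.card R : ℝ))⁻¹ by
    rw [← mul_inv, Real.mul_self_sqrt (Nat.cast_nonneg _)], Matrix.mul_apply]
  simp only [Matrix.conjTranspose_apply, Mx, Matrix.of_apply, Complex.star_def,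
    apply_ite (starRingEnd ℂ), map_zero, Complex.conj_ofReal, ite_mul, zero_mul, mul_ite,
    mul_zero]
  rw [Finset.sum_ite_mem, Finset.sum_ite_mem, Finset.univ_inter, Finset.inter_comm,
    ← Finset.filter_and, Finset.sum_const, nsmul_eq_mul, overlap, fiber, fiber]
  push_cast
  ring

end Mx

theorem inv_card_smul_one_add_vecMulVec_sub_sum_vecMulVec_apply {R Y : Type*} [Fintype R]
    [DecidableEq R] [DecidableEq Y] (p : R → Y → ℝ) (r : R) (y : Y) (r' : R) (y' : Y) :
    (((Fintype.card R : ℂ))⁻¹ • (1 : Matrix (R × Y) (R × Y) ℂ)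
        + vecMulVec (fun ry : R × Y => ((√(p ry.1 ry.2 / Fintype.card R) : ℝ) : ℂ))
            (star (fun ry : R × Y => ((√(p ry.1 ry.2 / Fintype.card R) : ℝ) : ℂ)))
        - ∑ s : R, ((Fintype.card R : ℂ))⁻¹ •
            vecMulVec (fun ry : R × Y => if ry.1 = s then ((√(p s ry.2) : ℝ) : ℂ) else 0)
              (star (fun ry : R × Y => if ry.1 = s then ((√(p s ry.2) : ℝ) : ℂ) else 0)))
        (r, y) (r', y') =
      (((Fintype.card R : ℝ)⁻¹ *
        if r = r' then (if y = y' then 1 else 0) else √(p r y) * √(p r' y') : ℝ) : ℂ) := by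
  have hR : (0 : ℝ) ≤ Fintype.card R := Nat.cast_nonneg _
  simp only [Matrix.add_apply, Matrix.sub_apply, Matrix.sum_apply, Matrix.smul_apply,
    vecMulVec_apply, Matrix.one_apply, Pi.star_apply, Complex.star_def,
    apply_ite (starRingEnd ℂ), map_zero, Complex.conj_ofReal, smul_eq_mul, ite_mul, zero_mul,
    mul_ite, mul_zero, ← Complex.ofReal_mul, Real.sqrt_div_mul_sqrt_div hR, Prod.mk.injEq,
    Finset.sum_ite_eq, Finset.mem_univ, if_true]
  split_ifs <;> simp_all

theorem stmt_5_general {X R Y : Type*} [Fintype X] [Fintype R] [Fintype Y]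
    [DecidableEq X] [DecidableEq R] [DecidableEq Y]
    (F : Finset ((X × R) → Y))
    (hpi : ∀ (p p' : X × R), p ≠ p' → ∀ (y y' : Y),
      ((F.filter (fun f => f p = y ∧ f p' = y')).card : ℝ) / F.card =
        ((F.filter (fun f => f p = y)).card : ℝ) / F.card *
          (((F.filter (fun f => f p' = y')).card : ℝ) / F.card))
    (x : X)
    (hne : ∀ (r : R) (y : Y), (F.filter (fun f => f (x, r) = y)).Nonempty) :
    (Mx F x)ᴴ * Mx F x =
      ((Fintype.card R : ℂ))⁻¹ • (1 : Matrix (R × Y) (R × Y) ℂ)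
        + Matrix.vecMulVec (fun ry : R × Y => ((Real.sqrt (prob F x ry.1 ry.2 / Fintype.card R) : ℝ) : ℂ))
            (star (fun ry : R × Y => ((Real.sqrt (prob F x ry.1 ry.2 / Fintype.card R) : ℝ) : ℂ)))
        - ∑ r : R, ((Fintype.card R : ℂ))⁻¹ •
            Matrix.vecMulVec
              (fun ry : R × Y => if ry.1 = r then ((Real.sqrt (prob F x r ry.2) : ℝ) : ℂ) else 0)
              (star (fun ry : R × Y => if ry.1 = r then ((Real.sqrt (prob F x r ry.2) : ℝ) : ℂ) else 0)) := by
  ext ⟨r, y⟩ ⟨r', y'⟩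
  rw [Mx.conjTranspose_mul_self_apply, inv_card_smul_one_add_vecMulVec_sub_sum_vecMulVec_apply,
    Mx.overlap_eq_ite F x (hne r y) (hne r' y')
      fun hr => hpi (x, r) (x, r') (fun h => hr (congrArg Prod.snd h)) y y']

/-- `M_x† M_x = (1/|R|)·I + |Φ₀⟩⟨Φ₀| − Σ_r (1/|R|)·|Φ_{0,r}⟩⟨Φ_{0,r}|`,
where `Φ₀ (r,y) = √(p_{x,r,y}/|R|)` and `Φ_{0,r} (r',y) = δ_{r r'}·√(p_{x,r,y})`. -/
theorem stmt_5 {X R Y : Type*} [Fintype X] [Fintype R] [Fintype Y]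
    [DecidableEq X] [DecidableEq R] [DecidableEq Y]
    (F : Finset ((X × R) → Y)) (hF : F.Nonempty)
    (hpi : ∀ (p p' : X × R), p ≠ p' → ∀ (y y' : Y),
      ((F.filter (fun f => f p = y ∧ f p' = y')).card : ℝ) / F.card =
        ((F.filter (fun f => f p = y)).card : ℝ) / F.card *
          (((F.filter (fun f => f p' = y')).card : ℝ) / F.card))
    (x : X)
    (hne : ∀ (r : R) (y : Y), (F.filter (fun f => f (x, r) = y)).Nonempty) :
    (Mx F x)ᴴ * Mx F x =
      ((Fintype.card R : ℂ))⁻¹ • (1 : Matrix (R × Y) (R × Y) ℂ)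
        + Matrix.vecMulVec (fun ry : R × Y => ((Real.sqrt (prob F x ry.1 ry.2 / Fintype.card R) : ℝ) : ℂ))
            (star (fun ry : R × Y => ((Real.sqrt (prob F x ry.1 ry.2 / Fintype.card R) : ℝ) : ℂ)))
        - ∑ r : R, ((Fintype.card R : ℂ))⁻¹ •
            Matrix.vecMulVec
              (fun ry : R × Y => if ry.1 = r then ((Real.sqrt (prob F x r ry.2) : ℝ) : ℂ) else 0)
              (star (fun ry : R × Y => if ry.1 = r then ((Real.sqrt (prob F x r ry.2) : ℝ) : ℂ) else 0)) :=
  stmt_5_general F hpi x hne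
end

section
/- Let D_G, D_H be databases with (D_G, D_H) chained (as above), and suppose x is an input to G that is not required for the chaining of any entry of D_H — i.e., either D_G(x) = ⊥, or D_G(x) = y with D_H having no entry of the form ((·), y) ↦ z, or there exists x' ≠ x with D_G(x') = y for the unique y = D_G(x). Then for any database D_G' that differs from D_G only at x, the pair (D_G', D_H) is still chained. -/
/-- A pair of databases `(D_G, D_H)` is chained if every entry `((w, y), z)` of `D_H`
has a matching entry `(x, y)` in `D_G`. -/
def Chained {XG W Y Z : Type*} (DG : XG → Option Y) (DH : W × Y → Option Z) : Prop :=
  ∀ (w : W) (y : Y) (z : Z), DH (w, y) = some z → ∃ x, DG x = some y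

/-- if `(D_G, D_H)` is chained and `x` is not required for the chaining
of any entry of `D_H` — i.e. `D_G x = ⊥`, or `D_G x = some y` with `D_H` having no
entry of the form `((·), y) ↦ z`, or some `x' ≠ x` also has `D_G x' = some y` — then
changing `D_G` only at `x` preserves the chaining property. -/
theorem stmt_18 {XG W Y Z : Type*} (DG DG' : XG → Option Y) (DH : W × Y → Option Z)
    (hchain : Chained DG DH) (x : XG)
    (hx : DG x = none
        ∨ (∃ y, DG x = some y ∧ ∀ (w : W) (z : Z), DH (w, y) ≠ some z)
        ∨ (∃ y, DG x = some y ∧ ∃ x', x' ≠ x ∧ DG x' = some y))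
    (hdiff : ∀ x', x' ≠ x → DG' x' = DG x') :
    Chained DG' DH := by
  intro w y z hz
  obtain ⟨x0, hx0⟩ := hchain w y z hz
  by_cases hne : x0 = x
  · subst hne
    rcases hx with h | ⟨y', hy', hno⟩ | ⟨y', hy', x', hx'ne, hx'⟩
    · rw [h] at hx0; exact absurd hx0 (by simp)
    · rw [hy'] at hx0; cases hx0; exact absurd hz (hno w z)
    · rw [hy'] at hx0; cases hx0
      exact ⟨x', by rw [hdiff x' hx'ne]; exact hx'⟩
  · exact ⟨x0, by rw [hdiff x0 hne]; exact hx0⟩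
end
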